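/- arXiv:1112.3390 — 4 statements merged into one kernel-verified Lean document; each statement's English description precedes it below -/
import Mathlib

section
/- Let m = ℓ₁⋯ℓₛ be a product of s distinct odd primes and let a be an integer with gcd(a,m)=1. Then the absolute value of the sum over t from 0 to m-1 of the Jacobi symbol ((t² - a)/m) equals 1. -/
/-!
For an odd prime `ℓ ∤ a` and `χ` the quadratic character mod `ℓ`, counting square roots gives
`∑ₓ χ(x² - a) = ∑_y (1 + χ y) χ(y - a)`. The part `∑_y χ(y - a)` vanishes, and the substitution
`y = a z` turns `∑_y χ(y) χ(y - a)` into `χ(-1) J(χ, χ)`, where the Jacobi sum is `J(χ, χ) = -χ(-1)`;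
so the sum is `-1`. By the Chinese remainder theorem, complete sums of Jacobi symbols of an integer
polynomial are multiplicative in the modulus, hence the sum modulo `ℓ₁ ⋯ ℓₛ` is `(-1)ˢ`.
-/

open Finset Polynomial ArithmeticFunction

section FiniteField

variable {F : Type*} [Field F] [Fintype F]

theorem sum_sq_eq_sum_quadraticChar [DecidableEq F] (hF : ringChar F ≠ 2) (g : F → ℤ) :
    ∑ x : F, g (x ^ 2) = ∑ y : F, (quadraticChar F y + 1) * g y := by
  rw [← sum_fiberwise univ (· ^ 2) (fun x => g (x ^ 2))]
  refine sum_congr rfl fun y _ => ?_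
  rw [sum_congr rfl fun x hx => by rw [(mem_filter.mp hx).2], sum_const, nsmul_eq_mul,
    ← quadraticChar_card_sqrts hF y]
  congr 3
  ext x
  simp

theorem MulChar.IsQuadratic.sum_mul_sub_eq_neg_one {R : Type*} [CommRing R] [IsDomain R]
    {χ : MulChar F R} (hχ : χ.IsQuadratic) (hχ₁ : χ ≠ 1) {a : F} (ha : a ≠ 0) :
    ∑ y : F, χ y * χ (y - a) = -1 := by
  have apply_sq : ∀ u : F, u ≠ 0 → χ u * χ u = 1 := fun u hu => by
    rw [← pow_two, ← Units.val_mk0 hu, ← MulChar.pow_apply_coe, hχ.sq_eq_one,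
      MulChar.one_apply_coe]
  calc ∑ y : F, χ y * χ (y - a)
      = ∑ z : F, χ (a * z) * χ (a * z - a) :=
        (Fintype.sum_bijective _ (mulLeft_bijective₀ a ha) _ _ fun _ => rfl).symm
    _ = (χ a * χ a) * χ (-1) * jacobiSum χ χ⁻¹ := by
        rw [hχ.inv, jacobiSum, mul_sum]
        refine sum_congr rfl fun z _ => ?_
        rw [show a * z - a = a * (-1) * (1 - z) by ring]
        simp only [map_mul]
        ring
    _ = -1 := by
        rw [jacobiSum_nontrivial_inv hχ₁, apply_sq a ha, one_mul, mul_neg,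
          apply_sq (-1) (neg_ne_zero.mpr one_ne_zero)]

theorem sum_quadraticChar_sq_sub [DecidableEq F] (hF : ringChar F ≠ 2) {a : F} (ha : a ≠ 0) :
    ∑ x : F, quadraticChar F (x ^ 2 - a) = -1 := by
  have sum_shift : ∑ y : F, quadraticChar F (y - a) = 0 :=
    ((Equiv.subRight a).sum_comp _).trans (quadraticChar_sum_zero hF)
  rw [sum_sq_eq_sum_quadraticChar hF fun y => quadraticChar F (y - a)]
  simp only [add_mul, one_mul, sum_add_distrib, sum_shift, add_zero,
    (quadraticChar_isQuadratic F).sum_mul_sub_eq_neg_one (quadraticChar_ne_one hF) ha]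

end FiniteField

theorem Finset.sum_range_eq_sum_zmod_val {M : Type*} [AddCommMonoid M] (n : ℕ) [NeZero n]
    (g : ℕ → M) : ∑ t ∈ range n, g t = ∑ x : ZMod n, g x.val := by
  obtain ⟨k, rfl⟩ := Nat.exists_eq_succ_of_ne_zero (NeZero.ne n)
  exact (Fin.sum_univ_eq_sum_range g (k + 1)).symm

theorem jacobiSym_eval_congr (f : ℤ[X]) {m : ℕ} {s t : ℤ} (h : s ≡ t [ZMOD m]) :
    jacobiSym (f.eval s) m = jacobiSym (f.eval t) m :=
  jacobiSym.mod_left' (Int.modEq_of_dvd (h.dvd.trans (sub_dvd_eval_sub t s f)))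

theorem jacobiSym_eval_val_natCast (f : ℤ[X]) (m t : ℕ) :
    jacobiSym (f.eval ((t : ZMod m).val : ℤ)) m = jacobiSym (f.eval (t : ℤ)) m :=
  jacobiSym_eval_congr f (by rw [ZMod.val_natCast, Int.natCast_mod]; exact Int.mod_modEq _ _)

-- At `m = 0` this is the empty sum, which makes it an arithmetic function.
def jacobiSymSum (f : ℤ[X]) : ArithmeticFunction ℤ :=
  ⟨fun m => ∑ t ∈ range m, jacobiSym (f.eval (t : ℤ)) m, sum_range_zero _⟩

theorem jacobiSymSum_apply (f : ℤ[X]) (m : ℕ) :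
    jacobiSymSum f m = ∑ t ∈ range m, jacobiSym (f.eval (t : ℤ)) m :=
  rfl

theorem jacobiSymSum_eq_sum_zmod (f : ℤ[X]) (m : ℕ) [NeZero m] :
    jacobiSymSum f m = ∑ x : ZMod m, jacobiSym (f.eval (x.val : ℤ)) m :=
  sum_range_eq_sum_zmod_val m _

theorem jacobiSymSum_mul_of_neZero (f : ℤ[X]) {m n : ℕ} [NeZero m] [NeZero n]
    (h : m.Coprime n) : jacobiSymSum f (m * n) = jacobiSymSum f m * jacobiSymSum f n := by
  let e := ZMod.chineseRemainder h
  have e_fst (x : ZMod (m * n)) : (e x).1 = (x.val : ZMod m) := by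
    change (ZMod.cast x : ZMod m × ZMod n).1 = _
    rw [Prod.fst_zmod_cast, ZMod.cast_eq_val]
  have e_snd (x : ZMod (m * n)) : (e x).2 = (x.val : ZMod n) := by
    change (ZMod.cast x : ZMod m × ZMod n).2 = _
    rw [Prod.snd_zmod_cast, ZMod.cast_eq_val]
  calc jacobiSymSum f (m * n)
      = ∑ x : ZMod (m * n), jacobiSym (f.eval ((e x).1.val : ℤ)) m
          * jacobiSym (f.eval ((e x).2.val : ℤ)) n := by
        rw [jacobiSymSum_eq_sum_zmod]
        refine sum_congr rfl fun x _ => ?_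
        rw [e_fst, e_snd, jacobiSym_eval_val_natCast, jacobiSym_eval_val_natCast,
          jacobiSym.mul_right]
    _ = ∑ p : ZMod m × ZMod n, jacobiSym (f.eval (p.1.val : ℤ)) m
          * jacobiSym (f.eval (p.2.val : ℤ)) n :=
        e.toEquiv.sum_comp fun p => jacobiSym (f.eval (p.1.val : ℤ)) m
          * jacobiSym (f.eval (p.2.val : ℤ)) n
    _ = jacobiSymSum f m * jacobiSymSum f n := by
        rw [jacobiSymSum_eq_sum_zmod, jacobiSymSum_eq_sum_zmod, Fintype.sum_mul_sum,
          Fintype.sum_prod_type]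

theorem isMultiplicative_jacobiSymSum (f : ℤ[X]) : (jacobiSymSum f).IsMultiplicative := by
  refine ⟨by simp [jacobiSymSum_apply], fun {m n} h => ?_⟩
  rcases eq_or_ne m 0 with rfl | hm
  · simp
  rcases eq_or_ne n 0 with rfl | hn
  · simp
  have : NeZero m := ⟨hm⟩
  have : NeZero n := ⟨hn⟩
  exact jacobiSymSum_mul_of_neZero f h

theorem jacobiSymSum_X_sq_sub_C_of_prime {p : ℕ} [Fact p.Prime] (hp : p ≠ 2) {a : ℤ}
    (ha : (a : ZMod p) ≠ 0) : jacobiSymSum (X ^ 2 - C a) p = -1 := by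
  rw [jacobiSymSum_eq_sum_zmod,
    ← sum_quadraticChar_sq_sub (by rwa [ZMod.ringChar_zmod_n]) ha]
  refine sum_congr rfl fun x _ => ?_
  rw [← jacobiSym.legendreSym.to_jacobiSym, legendreSym]
  simp

theorem ZMod.intCast_ne_zero_of_gcd_eq_one {a : ℤ} {m p : ℕ} (hp : p.Prime) (hpm : p ∣ m)
    (ha : Int.gcd a m = 1) : (a : ZMod p) ≠ 0 := by
  rw [Ne, ZMod.intCast_zmod_eq_zero_iff_dvd, Int.natCast_dvd]
  exact (Nat.Prime.coprime_iff_not_dvd hp).mp (Nat.Coprime.coprime_dvd_right hpm ha).symm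

theorem abs_sum_jacobi_quadratic_complete (s : Finset ℕ)
    (hs : ∀ ℓ ∈ s, ℓ.Prime ∧ ℓ ≠ 2) (m : ℕ) (hm : m = ∏ ℓ ∈ s, ℓ)
    (a : ℤ) (ha : Int.gcd a m = 1) :
    |∑ t ∈ Finset.range m, jacobiSym ((t : ℤ) ^ 2 - a) m| = 1 := by
  have sum_eq : ∑ t ∈ Finset.range m, jacobiSym ((t : ℤ) ^ 2 - a) m
      = jacobiSymSum (X ^ 2 - C a) m := by
    simp [jacobiSymSum_apply]
  have sum_at_prime (ℓ : ℕ) (hℓ : ℓ ∈ s) : jacobiSymSum (X ^ 2 - C a) ℓ = -1 := by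
    have : Fact ℓ.Prime := ⟨(hs ℓ hℓ).1⟩
    exact jacobiSymSum_X_sq_sub_C_of_prime (hs ℓ hℓ).2
      (ZMod.intCast_ne_zero_of_gcd_eq_one (hs ℓ hℓ).1 (hm ▸ dvd_prod_of_mem _ hℓ) ha)
  rw [sum_eq, hm, (isMultiplicative_jacobiSymSum _).map_prod_of_prime s fun ℓ hℓ => (hs ℓ hℓ).1,
    prod_congr rfl sum_at_prime, prod_const, abs_pow, abs_neg, abs_one, one_pow]
end

section
/- Fix an integer ν ≥ 1. For any real numbers L ≥ 3 and T ≥ 1 and any integer a, one has ∑_{|t| < T} ω_L(t² - a)^ν ≪ T·∑_{j=1}^{ν}(∑_{L ≤ ℓ ≤ 2L} 1/ℓ)^j + ∑_{j=1}^{ν} π(2L)^j, where the implied constant depends only on ν. -/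
/-- The primes in the interval `[L, 2L]`. -/
noncomputable def primesIn (L : ℝ) : Finset ℕ := (Finset.Icc ⌈L⌉₊ ⌊2 * L⌋₊).filter Nat.Prime

/-- `omegaL L n` is the number of primes in `[L, 2L]` dividing `n`. -/
noncomputable def omegaL (L : ℝ) (n : ℤ) : ℕ := ((primesIn L).filter (fun ℓ : ℕ => ((ℓ : ℤ) ∣ n))).card

open Nat in

lemma aux_pow_le (ν x : ℕ) (hν : 1 ≤ ν) :
    x ^ ν ≤ ν ^ ν * (x.choose 1 + x.choose ν) := by
  rcases le_or_gt x ν with hx | hx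
  · have h1 : x ^ ν ≤ ν ^ ν * x.choose 1 := by
      rw [Nat.choose_one_right]
      calc x ^ ν = x ^ (ν - 1) * x := by
            rw [← pow_succ, Nat.sub_add_cancel hν]
        _ ≤ ν ^ ν * x := Nat.mul_le_mul
            (le_trans (Nat.pow_le_pow_left hx _) (Nat.pow_le_pow_right hν (Nat.sub_le _ _)))
            le_rfl
    exact le_trans h1 (Nat.mul_le_mul_left _ (Nat.le_add_right _ _))
  · have key : x ^ ν * ν ! ≤ ν ^ ν * x.descFactorial ν := by
      rw [Nat.descFactorial_eq_prod_range]
      have hfac : ν ! = ∏ i ∈ Finset.range ν, (ν - i) := by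
        rw [← Finset.prod_range_add_one_eq_factorial, ← Finset.prod_range_reflect]
        refine Finset.prod_congr rfl fun i hi => ?_
        simp only [Finset.mem_range] at hi
        omega
      have hx' : x ^ ν = ∏ _i ∈ Finset.range ν, x := by
        rw [Finset.prod_const, Finset.card_range]
      have hν' : ν ^ ν = ∏ _i ∈ Finset.range ν, ν := by
        rw [Finset.prod_const, Finset.card_range]
      rw [hfac, hx', hν', ← Finset.prod_mul_distrib, ← Finset.prod_mul_distrib]
      refine Finset.prod_le_prod' fun i hi => ?_
      simp only [Finset.mem_range] at hi
      zify [le_of_lt (lt_of_lt_of_le hi hx.le), hi.le]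
      nlinarith [hx, hi]
    have h2 : x ^ ν ≤ ν ^ ν * x.choose ν := by
      have := key
      rw [Nat.descFactorial_eq_factorial_mul_choose] at this
      have h3 : x ^ ν * ν ! ≤ ν ^ ν * x.choose ν * ν ! := by
        calc x ^ ν * ν ! ≤ ν ^ ν * (ν ! * x.choose ν) := this
          _ = ν ^ ν * x.choose ν * ν ! := by ring
      exact Nat.le_of_mul_le_mul_right h3 (Nat.factorial_pos ν)
    calc x ^ ν ≤ ν ^ ν * x.choose ν := h2
      _ ≤ _ := Nat.mul_le_mul_left _ (Nat.le_add_left _ _)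


lemma esymm_le_pow (P : Finset ℕ) (f : ℕ → ℝ) (hf : ∀ i ∈ P, 0 ≤ f i) :
    ∀ j, ∑ S ∈ P.powersetCard j, ∏ ℓ ∈ S, f ℓ ≤ (∑ ℓ ∈ P, f ℓ) ^ j := by
  intro j
  induction j with
  | zero => simp
  | succ j ih =>
    classical
    set g : Finset ℕ → ℕ × Finset ℕ := fun S =>
      if h : S.Nonempty then (S.max' h, S.erase (S.max' h)) else (0, ∅) with hg
    have hne : ∀ S ∈ P.powersetCard (j+1), S.Nonempty := by
      intro S hS
      rw [Finset.mem_powersetCard] at hS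
      exact Finset.card_pos.mp (hS.2 ▸ Nat.succ_pos j)
    have hinj : ∀ x ∈ P.powersetCard (j+1), ∀ y ∈ P.powersetCard (j+1), g x = g y → x = y := by
      intro S hS S' hS' h
      have h1 := hne S hS
      have h2 := hne S' hS'
      rw [hg] at h
      simp only [dif_pos h1, dif_pos h2, Prod.mk.injEq] at h
      have := Finset.insert_erase (S.max'_mem h1)
      rw [← this, h.2, h.1, Finset.insert_erase (S'.max'_mem h2)]
    have step1 : ∑ p ∈ (P.powersetCard (j+1)).image g, f p.1 * ∏ ℓ ∈ p.2, f ℓ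
        = ∑ S ∈ P.powersetCard (j+1), ∏ ℓ ∈ S, f ℓ := by
      rw [Finset.sum_image hinj]
      refine Finset.sum_congr rfl fun S hS => ?_
      have h1 := hne S hS
      rw [hg]
      simp only [dif_pos h1]
      exact Finset.mul_prod_erase S f (S.max'_mem h1)
    have step2 : ∑ p ∈ (P.powersetCard (j+1)).image g, f p.1 * ∏ ℓ ∈ p.2, f ℓ
        ≤ ∑ p ∈ P ×ˢ P.powersetCard j, f p.1 * ∏ ℓ ∈ p.2, f ℓ := by
      apply Finset.sum_le_sum_of_subset_of_nonneg
      · intro p hp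
        simp only [Finset.mem_image] at hp
        obtain ⟨S, hS, rfl⟩ := hp
        have h1 := hne S hS
        rw [Finset.mem_powersetCard] at hS
        rw [hg]
        simp only [dif_pos h1, Finset.mem_product]
        refine ⟨hS.1 (S.max'_mem h1), ?_⟩
        rw [Finset.mem_powersetCard]
        refine ⟨(Finset.erase_subset _ _).trans hS.1, ?_⟩
        rw [Finset.card_erase_of_mem (S.max'_mem h1), hS.2]
        omega
      · intro p hp _
        rw [Finset.mem_product, Finset.mem_powersetCard] at hp
        exact mul_nonneg (hf _ hp.1) (Finset.prod_nonneg fun i hi => hf i (hp.2.1 hi))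
    have step3 : ∑ p ∈ P ×ˢ P.powersetCard j, f p.1 * ∏ ℓ ∈ p.2, f ℓ
        = (∑ ℓ ∈ P, f ℓ) * ∑ S ∈ P.powersetCard j, ∏ ℓ ∈ S, f ℓ := by
      rw [Finset.sum_product, Finset.sum_mul]
      exact Finset.sum_congr rfl fun ℓ _ => by simp [Finset.mul_sum]
    calc ∑ S ∈ P.powersetCard (j+1), ∏ ℓ ∈ S, f ℓ
        = ∑ p ∈ (P.powersetCard (j+1)).image g, f p.1 * ∏ ℓ ∈ p.2, f ℓ := step1.symm
      _ ≤ ∑ p ∈ P ×ˢ P.powersetCard j, f p.1 * ∏ ℓ ∈ p.2, f ℓ := step2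
      _ = (∑ ℓ ∈ P, f ℓ) * ∑ S ∈ P.powersetCard j, ∏ ℓ ∈ S, f ℓ := step3
      _ ≤ (∑ ℓ ∈ P, f ℓ) * (∑ ℓ ∈ P, f ℓ) ^ j := by
          exact mul_le_mul_of_nonneg_left ih (Finset.sum_nonneg hf)
      _ = (∑ ℓ ∈ P, f ℓ) ^ (j+1) := by ring


lemma count_sols (N : ℤ) (hN : 1 ≤ N) (a : ℤ) (S : Finset ℕ)
    (hP : ∀ ℓ ∈ S, Nat.Prime ℓ) :
    (((Finset.Ioo (-N) N).filter (fun t : ℤ => ∀ ℓ ∈ S, (ℓ : ℤ) ∣ t ^ 2 - a)).card : ℝ) ≤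
      2 ^ S.card * (2 * N / (∏ ℓ ∈ S, (ℓ : ℝ)) + 1) := by
  set m : ℕ := ∏ ℓ ∈ S, ℓ with hm
  have hm1 : 1 ≤ m := Finset.one_le_prod' fun ℓ hℓ => (hP ℓ hℓ).one_lt.le
  have hmR : (0:ℝ) < (m:ℝ) := by exact_mod_cast hm1
  have hprodR : (∏ ℓ ∈ S, (ℓ : ℝ)) = (m:ℝ) := by rw [hm]; push_cast; ring
  set sols := (Finset.Ioo (-N) N).filter (fun t : ℤ => ∀ ℓ ∈ S, (ℓ : ℤ) ∣ t ^ 2 - a) with hsols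
  rcases Finset.eq_empty_or_nonempty sols with he | ⟨t₀, ht₀⟩
  · rw [he]
    simp only [Finset.card_empty, Nat.cast_zero]
    have : (0:ℝ) ≤ 2 * N / (∏ ℓ ∈ S, (ℓ : ℝ)) := by
      rw [hprodR]
      positivity
    positivity
  · have ht₀' := Finset.mem_filter.mp ht₀
    set q : ℤ := 2 * N / (m : ℤ) with hq
    have hq0 : 0 ≤ q := Int.ediv_nonneg (by linarith) (by positivity)
    set F : ℤ → ({x // x ∈ S} → Bool) × ℤ :=
      fun t => (fun ℓ => decide ((ℓ.1 : ℤ) ∣ (t - t₀)), (t + N) / (m : ℤ)) with hF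
    have key : ∀ t ∈ sols, ∀ t' ∈ sols, F t = F t' → t = t' := by
      intro t ht t' ht' h
      have htf := Finset.mem_filter.mp ht
      have htf' := Finset.mem_filter.mp ht'
      have hd : ∀ ℓ ∈ S, (ℓ : ℤ) ∣ t - t' := by
        intro ℓ hℓ
        have hpZ : Prime ((ℓ : ℕ) : ℤ) := Nat.prime_iff_prime_int.mp (hP ℓ hℓ)
        have h1 : decide ((ℓ : ℤ) ∣ (t - t₀)) = decide ((ℓ : ℤ) ∣ (t' - t₀)) :=
          congrFun (congrArg Prod.fst h) ⟨ℓ, hℓ⟩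
        rw [decide_eq_decide] at h1
        by_cases hc : (ℓ : ℤ) ∣ t - t₀
        · have hc' := h1.mp hc
          have := dvd_sub hc hc'
          simpa using this
        · have hdt : (ℓ : ℤ) ∣ (t - t₀) * (t + t₀) := by
            have h2 := htf.2 ℓ hℓ
            have h3 := ht₀'.2 ℓ hℓ
            have : (ℓ : ℤ) ∣ (t ^ 2 - a) - (t₀ ^ 2 - a) := dvd_sub h2 h3
            have heq : (t ^ 2 - a) - (t₀ ^ 2 - a) = (t - t₀) * (t + t₀) := by ring
            rwa [heq] at this
          have hplus : (ℓ : ℤ) ∣ t + t₀ := ((hpZ.dvd_mul).mp hdt).resolve_left hc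
          have hc2 : ¬ (ℓ : ℤ) ∣ t' - t₀ := fun hx => hc (h1.mpr hx)
          have hdt' : (ℓ : ℤ) ∣ (t' - t₀) * (t' + t₀) := by
            have h2 := htf'.2 ℓ hℓ
            have h3 := ht₀'.2 ℓ hℓ
            have : (ℓ : ℤ) ∣ (t' ^ 2 - a) - (t₀ ^ 2 - a) := dvd_sub h2 h3
            have heq : (t' ^ 2 - a) - (t₀ ^ 2 - a) = (t' - t₀) * (t' + t₀) := by ring
            rwa [heq] at this
          have hplus' : (ℓ : ℤ) ∣ t' + t₀ := ((hpZ.dvd_mul).mp hdt').resolve_left hc2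
          have := dvd_sub hplus hplus'
          simpa using this
      have hmdvd : ((m : ℕ) : ℤ) ∣ t - t' := by
        have hcop : (↑S : Set ℕ).Pairwise (Function.onFun IsCoprime fun ℓ : ℕ => (ℓ : ℤ)) := by
          intro x hx y hy hxy
          exact Int.isCoprime_iff_gcd_eq_one.mpr <| by
            simpa [Int.gcd_natCast_natCast] using
              (Nat.coprime_primes (hP x hx) (hP y hy)).mpr hxy
        have := Finset.prod_dvd_of_coprime hcop hd
        rw [hm]
        push_cast
        exact this
      have h2 : (t + N) / (m : ℤ) = (t' + N) / (m : ℤ) := congrArg Prod.snd h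
      have hmod : (t + N) % (m : ℤ) = (t' + N) % (m : ℤ) := by
        have : ((m : ℕ) : ℤ) ∣ (t' + N) - (t + N) := by
          have : t' + N - (t + N) = -(t - t') := by ring
          rw [this]
          exact dvd_neg.mpr hmdvd
        exact Int.modEq_iff_dvd.mpr this
      have e1 := Int.mul_ediv_add_emod (t + N) (m : ℤ)
      have e2 := Int.mul_ediv_add_emod (t' + N) (m : ℤ)
      have : (m:ℤ) * ((t + N) / (m:ℤ)) = (m:ℤ) * ((t' + N) / (m:ℤ)) := by rw [h2]
      linarith [e1, e2]
    have hmaps : ∀ t ∈ sols, F t ∈ (Finset.univ : Finset ({x // x ∈ S} → Bool)) ×ˢ Finset.Ico (0:ℤ) (q+1) := by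
      intro t ht
      have htf := Finset.mem_filter.mp ht
      have hI := Finset.mem_Ioo.mp htf.1
      rw [Finset.mem_product]
      refine ⟨Finset.mem_univ _, ?_⟩
      rw [Finset.mem_Ico]
      constructor
      · exact Int.ediv_nonneg (by linarith [hI.1]) (by positivity)
      · show (t + N) / (m:ℤ) < q + 1
        have : (t + N) / (m:ℤ) ≤ 2 * N / (m:ℤ) :=
          Int.ediv_le_ediv (by exact_mod_cast hm1) (by linarith [hI.2])
        omega
    have hcard : sols.card ≤ 2 ^ S.card * (q+1).toNat := by
      have := Finset.card_le_card_of_injOn F hmaps key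
      have hcard2 : ((Finset.univ : Finset ({x // x ∈ S} → Bool)) ×ˢ Finset.Ico (0:ℤ) (q+1)).card
          = 2 ^ S.card * (q+1).toNat := by
        rw [Finset.card_product, Int.card_Ico]
        congr 1
        · rw [Finset.card_univ, Fintype.card_fun, Fintype.card_coe, Fintype.card_bool]
        · congr 1
          omega
      rwa [hcard2] at this
    have hqR : (q : ℝ) ≤ 2 * N / (m : ℝ) := by
      rw [le_div_iff₀ hmR]
      have := Int.ediv_mul_le (2 * N) (show (m:ℤ) ≠ 0 by positivity)
      have h3 : q * (m:ℤ) ≤ 2 * N := this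
      exact_mod_cast h3
    calc (sols.card : ℝ) ≤ 2 ^ S.card * ((q+1).toNat : ℝ) := by exact_mod_cast hcard
      _ = 2 ^ S.card * ((q:ℝ) + 1) := by
          congr 1
          have : ((q+1).toNat : ℤ) = q + 1 := Int.toNat_of_nonneg (by omega)
          exact_mod_cast this
      _ ≤ 2 ^ S.card * (2 * N / (∏ ℓ ∈ S, (ℓ : ℝ)) + 1) := by
          rw [hprodR]
          have h2 : (0:ℝ) ≤ 2 ^ S.card := by positivity
          nlinarith [hqR]

lemma choose_eq_card (L : ℝ) (n : ℤ) (j : ℕ) :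
    (omegaL L n).choose j
      = (((primesIn L).powersetCard j).filter
          (fun S => ∀ ℓ : ℕ, ℓ ∈ S → (ℓ : ℤ) ∣ n)).card := by
  rw [omegaL, ← Finset.card_powersetCard]
  congr 1
  ext S
  simp only [Finset.mem_powersetCard, Finset.mem_filter, Finset.subset_iff]
  constructor
  · intro ⟨h1, h2⟩
    exact ⟨⟨fun x hx => (h1 hx).1, h2⟩, fun x hx => (h1 hx).2⟩
  · intro ⟨⟨h1, h2⟩, h3⟩
    exact ⟨fun x hx => ⟨h1 hx, h3 x hx⟩, h2⟩

theorem moment_omegaL_expanded (ν : ℕ) (hν : 1 ≤ ν) :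
    ∃ C : ℝ, 0 < C ∧ ∀ (L T : ℝ) (a : ℤ), 3 ≤ L → 1 ≤ T →
      ∑ t ∈ Finset.Ioo (-⌈T⌉) ⌈T⌉, (omegaL L (t ^ 2 - a) : ℝ) ^ ν ≤
        C * (T * ∑ j ∈ Finset.Icc 1 ν, (∑ ℓ ∈ primesIn L, (1 : ℝ) / ℓ) ^ j +
          ∑ j ∈ Finset.Icc 1 ν, ((⌊2 * L⌋₊.primeCounting : ℝ)) ^ j) := by
  refine ⟨(ν : ℝ) ^ ν * 2 ^ ν * 8, by positivity, ?_⟩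
  intro L T a hL hT
  set P := primesIn L with hPdef
  set N : ℤ := ⌈T⌉ with hNdef
  have hTN : (N : ℝ) ≤ 2 * T := by
    have h1 : (N : ℝ) ≤ T + 1 := le_of_lt (Int.ceil_lt_add_one T)
    linarith
  have hN1 : 1 ≤ N := by
    have := Int.ceil_pos.mpr (show (0:ℝ) < T by linarith)
    omega
  have hprime : ∀ ℓ ∈ P, Nat.Prime ℓ := fun ℓ h => (Finset.mem_filter.mp h).2
  set σ : ℝ := ∑ ℓ ∈ P, (1 : ℝ) / ℓ with hσdef
  have hσ0 : 0 ≤ σ := Finset.sum_nonneg fun i _ => by positivity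
  set π : ℝ := (⌊2 * L⌋₊.primeCounting : ℝ) with hπdef
  have hπ0 : 0 ≤ π := Nat.cast_nonneg _
  have hcardP : (P.card : ℝ) ≤ π := by
    have hsub : P ⊆ (Finset.range (⌊2 * L⌋₊ + 1)).filter Nat.Prime := by
      intro ℓ hℓ
      rw [hPdef, primesIn, Finset.mem_filter, Finset.mem_Icc] at hℓ
      rw [Finset.mem_filter, Finset.mem_range]
      exact ⟨by omega, hℓ.2⟩
    have h1 : P.card ≤ ((Finset.range (⌊2 * L⌋₊ + 1)).filter Nat.Prime).card :=
      Finset.card_le_card hsub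
    have h2 : ((Finset.range (⌊2 * L⌋₊ + 1)).filter Nat.Prime).card = ⌊2 * L⌋₊.primeCounting := by
      rw [Nat.primeCounting, Nat.primeCounting', Nat.count_eq_card_filter_range]
    rw [hπdef]
    exact_mod_cast h2 ▸ h1
  have main_j : ∀ j, 1 ≤ j → j ≤ ν →
      ∑ t ∈ Finset.Ioo (-N) N, ((omegaL L (t ^ 2 - a)).choose j : ℝ)
        ≤ 2 ^ ν * (4 * T * σ ^ j + π ^ j) := by
    intro j hj1 hjν
    have hswap : ∑ t ∈ Finset.Ioo (-N) N, ((omegaL L (t ^ 2 - a)).choose j : ℝ)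
        = ∑ S ∈ P.powersetCard j,
            (((Finset.Ioo (-N) N).filter (fun t : ℤ => ∀ ℓ ∈ S, (ℓ : ℤ) ∣ t ^ 2 - a)).card : ℝ) := by
      have h1 : ∀ t : ℤ, ((omegaL L (t ^ 2 - a)).choose j : ℝ)
          = ∑ S ∈ P.powersetCard j, (if ∀ ℓ ∈ S, (ℓ : ℤ) ∣ t ^ 2 - a then (1:ℝ) else 0) := by
        intro t
        rw [choose_eq_card, Finset.sum_boole]
      rw [Finset.sum_congr rfl fun t _ => h1 t, Finset.sum_comm]
      refine Finset.sum_congr rfl fun S _ => ?_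
      rw [Finset.sum_boole]
    rw [hswap]
    have hstep : ∀ S ∈ P.powersetCard j,
        (((Finset.Ioo (-N) N).filter (fun t : ℤ => ∀ ℓ ∈ S, (ℓ : ℤ) ∣ t ^ 2 - a)).card : ℝ)
          ≤ 2 ^ ν * (4 * T * ∏ ℓ ∈ S, (1 : ℝ) / ℓ + 1) := by
      intro S hS
      rw [Finset.mem_powersetCard] at hS
      have hSP : ∀ ℓ ∈ S, Nat.Prime ℓ := fun ℓ hℓ => hprime ℓ (hS.1 hℓ)
      have hn : 1 ≤ ∏ ℓ ∈ S, ℓ := Finset.one_le_prod' fun ℓ hℓ => (hSP ℓ hℓ).one_lt.le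
      have hprod1 : (1:ℝ) ≤ ∏ ℓ ∈ S, (ℓ : ℝ) := by
        rw [show (∏ ℓ ∈ S, (ℓ:ℝ)) = ((∏ ℓ ∈ S, ℓ : ℕ) : ℝ) by push_cast; ring]
        exact_mod_cast hn
      have hprodpos : (0:ℝ) < ∏ ℓ ∈ S, (ℓ : ℝ) := lt_of_lt_of_le one_pos hprod1
      have hinv : (∏ ℓ ∈ S, (1 : ℝ) / ℓ) = (∏ ℓ ∈ S, (ℓ : ℝ))⁻¹ := by
        rw [← Finset.prod_inv_distrib]
        exact Finset.prod_congr rfl fun ℓ _ => one_div _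
      calc (((Finset.Ioo (-N) N).filter (fun t : ℤ => ∀ ℓ ∈ S, (ℓ : ℤ) ∣ t ^ 2 - a)).card : ℝ)
          ≤ 2 ^ S.card * (2 * N / (∏ ℓ ∈ S, (ℓ : ℝ)) + 1) := count_sols N hN1 a S hSP
        _ ≤ 2 ^ ν * (4 * T * ∏ ℓ ∈ S, (1 : ℝ) / ℓ + 1) := by
            have h2 : (2:ℝ) ^ S.card ≤ 2 ^ ν := by
              apply pow_le_pow_right₀ one_le_two
              rw [hS.2]; exact hjν
            have h3 : 2 * (N:ℝ) / (∏ ℓ ∈ S, (ℓ : ℝ)) ≤ 4 * T * ∏ ℓ ∈ S, (1 : ℝ) / ℓ := by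
              rw [hinv, div_eq_mul_inv]
              have hip : (0:ℝ) < (∏ ℓ ∈ S, (ℓ : ℝ))⁻¹ := by positivity
              nlinarith
            have h4 : (0:ℝ) ≤ 2 * (N:ℝ) / (∏ ℓ ∈ S, (ℓ : ℝ)) + 1 := by positivity
            have h5 : (0:ℝ) ≤ (2:ℝ) ^ S.card := by positivity
            nlinarith
    calc ∑ S ∈ P.powersetCard j,
          (((Finset.Ioo (-N) N).filter (fun t : ℤ => ∀ ℓ ∈ S, (ℓ : ℤ) ∣ t ^ 2 - a)).card : ℝ)
        ≤ ∑ S ∈ P.powersetCard j, 2 ^ ν * (4 * T * ∏ ℓ ∈ S, (1 : ℝ) / ℓ + 1) :=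
          Finset.sum_le_sum hstep
      _ = 2 ^ ν * (4 * T * (∑ S ∈ P.powersetCard j, ∏ ℓ ∈ S, (1 : ℝ) / ℓ)
            + ((P.powersetCard j).card : ℝ)) := by
          rw [← Finset.mul_sum]
          congr 1
          rw [Finset.sum_add_distrib, ← Finset.mul_sum, Finset.sum_const, nsmul_eq_mul, mul_one]
      _ ≤ 2 ^ ν * (4 * T * σ ^ j + π ^ j) := by
          have hB := esymm_le_pow P (fun ℓ => (1:ℝ)/ℓ) (fun i _ => by positivity) j
          rw [← hσdef] at hB
          have hC : ((P.powersetCard j).card : ℝ) ≤ π ^ j := by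
            rw [Finset.card_powersetCard]
            calc ((P.card.choose j : ℕ) : ℝ) ≤ ((P.card ^ j : ℕ) : ℝ) := by
                  exact_mod_cast Nat.choose_le_pow P.card j
              _ = (P.card : ℝ) ^ j := by push_cast; ring
              _ ≤ π ^ j := pow_le_pow_left₀ (Nat.cast_nonneg _) hcardP j
          have hT4 : (0:ℝ) ≤ 4 * T := by linarith
          have h6 := mul_le_mul_of_nonneg_left hB hT4
          have h7 : (0:ℝ) ≤ (2:ℝ) ^ ν := by positivity
          nlinarith
  -- pointwise bound and final assembly
  have hpoint : ∀ t : ℤ, (omegaL L (t ^ 2 - a) : ℝ) ^ ν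
      ≤ (ν : ℝ) ^ ν * (((omegaL L (t ^ 2 - a)).choose 1 : ℝ)
          + ((omegaL L (t ^ 2 - a)).choose ν : ℝ)) := by
    intro t
    have h := aux_pow_le ν (omegaL L (t ^ 2 - a)) hν
    have := (Nat.cast_le (α := ℝ)).mpr h
    push_cast at this
    convert this using 2 <;> push_cast <;> ring
  have hsum1 := main_j 1 le_rfl hν
  have hsumν := main_j ν hν le_rfl
  set Sσ : ℝ := ∑ j ∈ Finset.Icc 1 ν, σ ^ j with hSσ
  set Sπ : ℝ := ∑ j ∈ Finset.Icc 1 ν, π ^ j with hSπ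
  have hmem1 : 1 ∈ Finset.Icc 1 ν := Finset.mem_Icc.mpr ⟨le_rfl, hν⟩
  have hmemν : ν ∈ Finset.Icc 1 ν := Finset.mem_Icc.mpr ⟨hν, le_rfl⟩
  have hσ1 : σ ^ 1 ≤ Sσ := Finset.single_le_sum (fun i _ => pow_nonneg hσ0 i) hmem1
  have hσν : σ ^ ν ≤ Sσ := Finset.single_le_sum (fun i _ => pow_nonneg hσ0 i) hmemν
  have hπ1 : π ^ 1 ≤ Sπ := Finset.single_le_sum (fun i _ => pow_nonneg hπ0 i) hmem1
  have hπν : π ^ ν ≤ Sπ := Finset.single_le_sum (fun i _ => pow_nonneg hπ0 i) hmemν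
  have hSσ0 : 0 ≤ Sσ := Finset.sum_nonneg fun i _ => pow_nonneg hσ0 i
  have hSπ0 : 0 ≤ Sπ := Finset.sum_nonneg fun i _ => pow_nonneg hπ0 i
  calc ∑ t ∈ Finset.Ioo (-N) N, (omegaL L (t ^ 2 - a) : ℝ) ^ ν
      ≤ ∑ t ∈ Finset.Ioo (-N) N, (ν : ℝ) ^ ν * (((omegaL L (t ^ 2 - a)).choose 1 : ℝ)
          + ((omegaL L (t ^ 2 - a)).choose ν : ℝ)) :=
        Finset.sum_le_sum fun t _ => hpoint t
    _ = (ν : ℝ) ^ ν * ((∑ t ∈ Finset.Ioo (-N) N, ((omegaL L (t ^ 2 - a)).choose 1 : ℝ))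
          + ∑ t ∈ Finset.Ioo (-N) N, ((omegaL L (t ^ 2 - a)).choose ν : ℝ)) := by
        rw [← Finset.mul_sum, Finset.sum_add_distrib]
    _ ≤ (ν : ℝ) ^ ν * (2 ^ ν * (4 * T * σ ^ 1 + π ^ 1) + 2 ^ ν * (4 * T * σ ^ ν + π ^ ν)) := by
        have hν0 : (0:ℝ) ≤ (ν : ℝ) ^ ν := by positivity
        exact mul_le_mul_of_nonneg_left (add_le_add hsum1 hsumν) hν0
    _ ≤ (ν : ℝ) ^ ν * 2 ^ ν * 8 * (T * Sσ + Sπ) := by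
        have hν0 : (0:ℝ) ≤ (ν : ℝ) ^ ν := by positivity
        have h20 : (0:ℝ) ≤ (2:ℝ) ^ ν := by positivity
        have hT0 : (0:ℝ) < T := by linarith
        have e1 : 4 * T * σ ^ 1 ≤ 4 * T * Sσ := by nlinarith
        have e2 : 4 * T * σ ^ ν ≤ 4 * T * Sσ := by nlinarith
        have inner : (4 * T * σ ^ 1 + π ^ 1) + (4 * T * σ ^ ν + π ^ ν)
            ≤ 8 * (T * Sσ + Sπ) := by nlinarith
        have hfac : (0:ℝ) ≤ (ν : ℝ) ^ ν * 2 ^ ν := by positivity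
        calc (ν : ℝ) ^ ν * (2 ^ ν * (4 * T * σ ^ 1 + π ^ 1) + 2 ^ ν * (4 * T * σ ^ ν + π ^ ν))
            = (ν : ℝ) ^ ν * 2 ^ ν * ((4 * T * σ ^ 1 + π ^ 1) + (4 * T * σ ^ ν + π ^ ν)) := by
              ring
          _ ≤ (ν : ℝ) ^ ν * 2 ^ ν * (8 * (T * Sσ + Sπ)) :=
              mul_le_mul_of_nonneg_left inner hfac
          _ = (ν : ℝ) ^ ν * 2 ^ ν * 8 * (T * Sσ + Sπ) := by ring
end

section
/- Fix an integer ν ≥ 1. For L ≥ 3, T ≥ 1 and any integer a, ∑_{|t| < T} ω_L(t² - a)^ν ≪ T/log L + L^ν/(log L)^ν, where the implied constant depends only on ν. -/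
/-!
Expanding the `ν`-th power, `∑ₜ ω_L(t² - a)^ν` counts the pairs `(t, (ℓ₁, …, ℓ_ν))` of an integer
`|t| < T` and a tuple of primes of `[L, 2L]` with every `ℓᵢ ∣ t² - a`. If the entries of the tuple
form a set `S` of `k` primes, the condition is `∏ S ∣ t² - a`; by the Chinese remainder theorem
`x² = a` has at most `2^k` roots modulo `∏ S ≥ L^k`, so at most `2^k (2T / L^k + 1)` integers `t`
qualify. At most `(π choose k) k^ν` tuples have exactly `k` distinct entries, where `π ≪ L / log L`
is the number of primes in `[L, 2L]` (Chebyshev). Summing over `1 ≤ k ≤ ν`, the terms `2T / L^k`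
contribute `≪ T / log L` and the terms `1` contribute `≪ (L / log L)^ν`.
-/

open Finset Real Function

lemma natCard_pow_eq_le {R : Type*} [CommRing R] [IsDomain R] {n : ℕ} (hn : 0 < n) (a : R) :
    Nat.card {x : R // x ^ n = a} ≤ n := by
  classical
  calc Nat.card {x : R // x ^ n = a}
      = Nat.card (Polynomial.nthRootsFinset n a) :=
        Nat.card_congr (Equiv.subtypeEquivRight fun x => (Polynomial.mem_nthRootsFinset hn a).symm)
    _ = #(Polynomial.nthRootsFinset n a) := Nat.card_eq_finsetCard _
    _ ≤ Multiset.card (Polynomial.nthRoots n a) := by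
        rw [Polynomial.nthRootsFinset_def]; exact Multiset.toFinset_card_le _
    _ ≤ n := Polynomial.card_nthRoots n a

lemma natCard_pow_eq_of_mulEquiv_prod {M A B : Type*} [Monoid M] [Monoid A] [Monoid B]
    (e : M ≃* A × B) (n : ℕ) (r : M) :
    Nat.card {x : M // x ^ n = r} =
      Nat.card {y : A // y ^ n = (e r).1} * Nat.card {z : B // z ^ n = (e r).2} := by
  rw [← Nat.card_prod]
  refine Nat.card_congr ((e.toEquiv.subtypeEquiv fun x => ?_).trans Equiv.subtypeProdEquivProd)
  rw [← e.injective.eq_iff, map_pow, Prod.ext_iff, Prod.pow_fst, Prod.pow_snd]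
  rfl

lemma ZMod.natCard_pow_eq_intCast_prod_le {S : Finset ℕ} (hS : ∀ p ∈ S, p.Prime) {n : ℕ}
    (hn : 0 < n) (a : ℤ) : Nat.card {x : ZMod (∏ p ∈ S, p) // x ^ n = a} ≤ n ^ #S := by
  classical
  induction S using Finset.induction_on with
  | empty =>
    simp only [prod_empty, card_empty, pow_zero]
    exact (Finite.card_subtype_le _).trans (by rw [Nat.card_zmod])
  | insert p S hpS ih =>
    have hp := hS p (mem_insert_self p S)
    have hS' : ∀ q ∈ S, q.Prime := fun q hq => hS q (mem_insert_of_mem hq)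
    have hcop : p.Coprime (∏ q ∈ S, q) := Nat.Coprime.prod_right fun q hq =>
      (Nat.coprime_primes hp (hS' q hq)).2 (ne_of_mem_of_not_mem hq hpS).symm
    have : Fact p.Prime := ⟨hp⟩
    rw [prod_insert hpS, card_insert_of_notMem hpS, pow_succ',
      natCard_pow_eq_of_mulEquiv_prod (ZMod.chineseRemainder hcop).toMulEquiv]
    simp only [RingEquiv.toMulEquiv_eq_coe, RingEquiv.coe_toMulEquiv, map_intCast,
      Prod.fst_intCast, Prod.snd_intCast]
    exact Nat.mul_le_mul (natCard_pow_eq_le hn _) (ih hS')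

lemma Int.card_filter_modEq_Ico_le {r : ℤ} (hr : 0 < r) {lo hi : ℤ} (h : lo ≤ hi) (v : ℤ) :
    (#{t ∈ Ico lo hi | t ≡ v [ZMOD r]} : ℝ) ≤ (hi - lo) / r + 1 := by
  have hq : (#{t ∈ Ico lo hi | t ≡ v [ZMOD r]} : ℚ) ≤ (hi - lo) / r + 1 := by
    have hcard := congrArg (Int.cast : ℤ → ℚ) (Int.Ico_filter_modEq_card lo hi hr v)
    push_cast at hcard
    have hlen : (0 : ℚ) ≤ (hi - lo) / r :=
      div_nonneg (sub_nonneg.2 (Int.cast_le.2 h)) (Int.cast_nonneg hr.le)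
    have hceil := Int.ceil_lt_add_one ((hi - v) / (r : ℚ))
    have hfloor := Int.le_ceil ((lo - v) / (r : ℚ))
    have hdiff : ((hi : ℚ) - v) / r - (lo - v) / r = (hi - lo) / r := by ring
    rw [hcard]
    exact max_le (by linarith) (by linarith)
  exact_mod_cast (Rat.cast_le (K := ℝ)).2 hq

lemma card_filter_dvd_pow_sub_le {m : ℕ} [NeZero m] {lo hi : ℤ} (h : lo ≤ hi) (k : ℕ) (a : ℤ) :
    (#{t ∈ Ico lo hi | (m : ℤ) ∣ t ^ k - a} : ℝ) ≤
      Nat.card {x : ZMod m // x ^ k = a} * (((hi : ℝ) - lo) / m + 1) := by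
  classical
  set R : Finset (ZMod m) := {x | x ^ k = a}
  have hsub : {t ∈ Ico lo hi | (m : ℤ) ∣ t ^ k - a} ⊆
      R.biUnion fun x => {t ∈ Ico lo hi | t ≡ (ZMod.val x : ℤ) [ZMOD m]} := by
    intro t ht
    rw [mem_filter] at ht
    refine mem_biUnion.2 ⟨t, ?_, mem_filter.2 ⟨ht.1, ?_⟩⟩
    · have h0 := (ZMod.intCast_zmod_eq_zero_iff_dvd _ m).2 ht.2
      push_cast at h0
      simpa [R, sub_eq_zero] using h0
    · rw [← ZMod.intCast_eq_intCast_iff]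
      simp
  have hm : (0 : ℤ) < m := by exact_mod_cast Nat.pos_of_ne_zero (NeZero.ne m)
  calc (#{t ∈ Ico lo hi | (m : ℤ) ∣ t ^ k - a} : ℝ)
      ≤ #(R.biUnion fun x => {t ∈ Ico lo hi | t ≡ (ZMod.val x : ℤ) [ZMOD m]}) := by
        exact_mod_cast card_le_card hsub
    _ ≤ ∑ x ∈ R, (#{t ∈ Ico lo hi | t ≡ (ZMod.val x : ℤ) [ZMOD m]} : ℝ) := by
        exact_mod_cast card_biUnion_le
    _ ≤ ∑ x ∈ R, (((hi : ℝ) - lo) / m + 1) := sum_le_sum fun x _ => by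
        simpa using Int.card_filter_modEq_Ico_le hm h (x.val : ℤ)
    _ = _ := by rw [sum_const, nsmul_eq_mul, Nat.card_eq_fintype_card, Fintype.card_subtype]

lemma card_filter_forall_prime_dvd_le {L : ℝ} (hL : 0 < L) {S : Finset ℕ}
    (hS : ∀ p ∈ S, p.Prime ∧ L ≤ p) {lo hi : ℤ} (h : lo ≤ hi) {k : ℕ} (hk : 0 < k) (a : ℤ) :
    (#{t ∈ Ico lo hi | ∀ p ∈ S, (p : ℤ) ∣ t ^ k - a} : ℝ) ≤
      k ^ #S * (((hi : ℝ) - lo) / L ^ #S + 1) := by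
  set m := ∏ p ∈ S, p
  have : NeZero m := ⟨(prod_pos fun p hp => (hS p hp).1.pos).ne'⟩
  have hcop : (S : Set ℕ).Pairwise (IsCoprime on fun p : ℕ => (p : ℤ)) := fun p hp q hq hpq =>
    Nat.isCoprime_iff_coprime.2 ((Nat.coprime_primes (hS p hp).1 (hS q hq).1).2 hpq)
  have hfilter : {t ∈ Ico lo hi | ∀ p ∈ S, (p : ℤ) ∣ t ^ k - a} =
      {t ∈ Ico lo hi | (m : ℤ) ∣ t ^ k - a} := by
    refine filter_congr fun t _ => ⟨fun hdvd => ?_, fun hdvd p hp => ?_⟩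
    · simpa [m] using prod_dvd_of_coprime hcop hdvd
    · exact (Int.natCast_dvd_natCast.2 (dvd_prod_of_mem _ hp)).trans hdvd
  have hLm : L ^ #S ≤ m := by
    rw [← prod_const, Nat.cast_prod]
    exact prod_le_prod (fun _ _ => hL.le) fun p hp => (hS p hp).2
  rw [hfilter]
  refine (card_filter_dvd_pow_sub_le h k a).trans ?_
  have hlen : (0 : ℝ) ≤ hi - lo := sub_nonneg.2 (Int.cast_le.2 h)
  refine mul_le_mul ?_ (by gcongr) (by positivity) (by positivity)
  exact_mod_cast ZMod.natCard_pow_eq_intCast_prod_le (fun p hp => (hS p hp).1) hk a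

lemma sum_card_filter_pow_eq_sum_piFinset {α β : Type*} (s : Finset α) (P : Finset β)
    (D : β → α → Prop) [∀ p t, Decidable (D p t)] (n : ℕ) :
    ∑ t ∈ s, #{p ∈ P | D p t} ^ n =
      ∑ f ∈ Fintype.piFinset fun _ : Fin n => P, #{t ∈ s | ∀ i, D (f i) t} := by
  have hpow : ∀ t, #{p ∈ P | D p t} ^ n =
      #{f ∈ Fintype.piFinset fun _ : Fin n => P | ∀ i, D (f i) t} := fun t => by
    rw [← Fintype.card_piFinset_const]
    congr 1
    ext f
    simp [forall_and]
  simp_rw [hpow]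
  exact sum_card_bipartiteAbove_eq_sum_card_bipartiteBelow _

lemma card_filter_card_image_eq_le {β ι : Type*} [Fintype ι] [DecidableEq ι] [DecidableEq β]
    (P : Finset β) (k : ℕ) :
    #{f ∈ Fintype.piFinset fun _ : ι => P | #(univ.image f) = k} ≤
      (#P).choose k * k ^ Fintype.card ι := by
  calc #{f ∈ Fintype.piFinset fun _ : ι => P | #(univ.image f) = k}
      ≤ #((P.powersetCard k).biUnion fun S => Fintype.piFinset fun _ : ι => S) := by
        refine card_le_card fun f hf => ?_
        simp only [mem_filter, Fintype.mem_piFinset] at hf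
        exact mem_biUnion.2 ⟨univ.image f,
          mem_powersetCard.2 ⟨image_subset_iff.2 fun i _ => hf.1 i, hf.2⟩,
          Fintype.mem_piFinset.2 fun i => mem_image_of_mem f (mem_univ i)⟩
    _ ≤ ∑ S ∈ P.powersetCard k, #(Fintype.piFinset fun _ : ι => S) := card_biUnion_le
    _ = (#P).choose k * k ^ Fintype.card ι := by
        rw [sum_congr rfl fun S hS => by
          rw [Fintype.card_piFinset, prod_const, card_univ, (mem_powersetCard.1 hS).2],
          sum_const, card_powersetCard, smul_eq_mul]

lemma sum_piFinset_le_sum_choose_mul {β ι : Type*} [Fintype ι] [DecidableEq ι] [DecidableEq β]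
    (P : Finset β) {g : ℕ → ℝ} (hg : ∀ k, 0 ≤ g k) :
    ∑ f ∈ Fintype.piFinset (fun _ : ι => P), g #(univ.image f) ≤
      ∑ k ∈ range (Fintype.card ι + 1), (#P).choose k * k ^ Fintype.card ι * g k := by
  have hmaps : ∀ f ∈ Fintype.piFinset (fun _ : ι => P),
      #(univ.image f) ∈ range (Fintype.card ι + 1) := fun f _ =>
    mem_range.2 (Nat.lt_succ_of_le (card_image_le.trans card_univ.le))
  rw [← sum_fiberwise_of_maps_to hmaps]
  refine sum_le_sum fun k _ => ?_
  rw [sum_congr rfl fun f hf => by rw [(mem_filter.1 hf).2], sum_const, nsmul_eq_mul]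
  gcongr
  · exact hg k
  · exact_mod_cast card_filter_card_image_eq_le P k

lemma prime_and_le_of_mem_primesIn {L : ℝ} {p : ℕ} (hp : p ∈ primesIn L) :
    p.Prime ∧ L ≤ p := by
  rw [primesIn, mem_filter, mem_Icc] at hp
  exact ⟨hp.2, Nat.ceil_le.1 hp.1.1⟩

lemma card_primesIn_mul_log_le {L : ℝ} (hL : 0 < L) :
    (#(primesIn L) : ℝ) * log L ≤ 2 * log 4 * L := by
  calc (#(primesIn L) : ℝ) * log L = ∑ _p ∈ primesIn L, log L := by
        rw [sum_const, nsmul_eq_mul]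
    _ ≤ ∑ p ∈ primesIn L, log p :=
        sum_le_sum fun p hp => log_le_log hL (prime_and_le_of_mem_primesIn hp).2
    _ ≤ Chebyshev.theta (2 * L) := by
        rw [Chebyshev.theta_eq_sum_Icc]
        exact sum_le_sum_of_subset_of_nonneg
          (filter_subset_filter _ (Icc_subset_Icc_left (Nat.zero_le _)))
          fun p _ _ => log_natCast_nonneg p
    _ ≤ log 4 * (2 * L) := Chebyshev.theta_le_log4_mul_x (by positivity)
    _ = 2 * log 4 * L := by ring

lemma pow_mul_le_pow_mul_of_le_one {c z : ℝ} (hc : 1 ≤ c) (hz₀ : 0 ≤ z) (hz₁ : z ≤ 1) {k ν : ℕ}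
    (hk : k ≠ 0) (hkν : k ≤ ν) : (c * z) ^ k ≤ c ^ ν * z := by
  rw [mul_pow]
  exact mul_le_mul (pow_le_pow_right₀ hc hkν) (pow_le_of_le_one hz₀ hz₁ hk) (by positivity)
    (by positivity)

lemma choose_mul_pow_mul_le {p : ℕ} {c L X : ℝ} (hc : 1 ≤ c) (hL : 0 < L) (hlogL : 1 ≤ log L)
    (hp : p * log L ≤ c * L) (hX : 0 ≤ X) {k ν : ℕ} (hν : ν ≠ 0) (hkν : k ≤ ν) :
    p.choose k * k ^ ν * (2 ^ k * (X / L ^ k + 1)) ≤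
      ν ^ ν * (2 * c) ^ ν * (X / log L + (L / log L) ^ ν) := by
  have hlog₀ : 0 < log L := by linarith
  rcases eq_or_ne k 0 with rfl | hk
  · rw [Nat.cast_zero, zero_pow hν, mul_zero, zero_mul]
    positivity
  have hdensity : (p : ℝ) / L ≤ c * (1 / log L) := by
    rw [div_le_iff₀ hL, mul_one_div, div_mul_eq_mul_div, le_div_iff₀ hlog₀]
    exact hp
  have hcount : (p : ℝ) ≤ c * (L / log L) := by
    rw [mul_div_assoc', le_div_iff₀ hlog₀]
    exact hp
  have hLlog : 1 ≤ L / log L := (one_le_div hlog₀).2 (by linarith [log_le_sub_one_of_pos hL])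
  calc p.choose k * k ^ ν * (2 ^ k * (X / L ^ k + 1))
      ≤ p ^ k * ν ^ ν * (2 ^ ν * (X / L ^ k + 1)) := by
        gcongr
        · exact_mod_cast p.choose_le_pow k
        · norm_num
    _ = ν ^ ν * 2 ^ ν * (X * (p / L) ^ k + p ^ k) := by
        rw [div_pow]
        field_simp
    _ ≤ ν ^ ν * 2 ^ ν * (X * (c ^ ν * (1 / log L)) + (c * (L / log L)) ^ ν) := by
        gcongr
        · exact (pow_le_pow_left₀ (by positivity) hdensity k).trans
            (pow_mul_le_pow_mul_of_le_one hc (by positivity)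
              ((div_le_one hlog₀).2 hlogL) hk hkν)
        · exact (pow_le_pow_left₀ (by positivity) hcount k).trans
            (pow_le_pow_right₀ (one_le_mul_of_one_le_of_one_le hc hLlog) hkν)
    _ = ν ^ ν * (2 * c) ^ ν * (X / log L + (L / log L) ^ ν) := by ring

lemma card_filter_forall_dvd_sq_sub_le {n : ℕ} {L : ℝ} (hL : 0 < L)
    {f : Fin n → ℕ} (hf : ∀ i, f i ∈ primesIn L) {N : ℤ} (hN : 0 ≤ N) (a : ℤ) :
    (#{t ∈ Ioo (-N) N | ∀ i, (f i : ℤ) ∣ t ^ 2 - a} : ℝ) ≤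
      2 ^ #(univ.image f) * (2 * N / L ^ #(univ.image f) + 1) := by
  have hcount := card_filter_forall_prime_dvd_le hL (S := univ.image f)
    (forall_mem_image.2 fun i _ => prime_and_le_of_mem_primesIn (hf i)) (by omega : -N ≤ N)
    two_pos a
  simp only [forall_mem_image, mem_univ, forall_const, Int.cast_neg, sub_neg_eq_add,
    Nat.cast_ofNat] at hcount
  rw [← two_mul] at hcount
  calc (#{t ∈ Ioo (-N) N | ∀ i, (f i : ℤ) ∣ t ^ 2 - a} : ℝ)
      ≤ #{t ∈ Ico (-N) N | ∀ i, (f i : ℤ) ∣ t ^ 2 - a} := by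
        exact_mod_cast card_le_card (filter_subset_filter _ Ioo_subset_Ico_self)
    _ ≤ _ := hcount

lemma sum_omegaL_pow_le {L : ℝ} (hL : 0 < L) {N : ℤ} (hN : 0 ≤ N) (a : ℤ) (ν : ℕ) :
    ∑ t ∈ Ioo (-N) N, (omegaL L (t ^ 2 - a) : ℝ) ^ ν ≤
      ∑ k ∈ range (ν + 1), (#(primesIn L)).choose k * k ^ ν * (2 ^ k * (2 * N / L ^ k + 1)) := by
  calc ∑ t ∈ Ioo (-N) N, (omegaL L (t ^ 2 - a) : ℝ) ^ ν
      = ∑ f ∈ Fintype.piFinset fun _ : Fin ν => primesIn L,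
          (#{t ∈ Ioo (-N) N | ∀ i, (f i : ℤ) ∣ t ^ 2 - a} : ℝ) := by
        have h := congrArg (Nat.cast : ℕ → ℝ) (sum_card_filter_pow_eq_sum_piFinset
          (Ioo (-N) N) (primesIn L) (fun p t => (p : ℤ) ∣ t ^ 2 - a) ν)
        push_cast at h
        exact h
    _ ≤ ∑ f ∈ Fintype.piFinset fun _ : Fin ν => primesIn L,
          2 ^ #(univ.image f) * (2 * N / L ^ #(univ.image f) + 1) :=
        sum_le_sum fun f hf => card_filter_forall_dvd_sq_sub_le hL (Fintype.mem_piFinset.1 hf) hN a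
    _ ≤ _ := by
        simpa using sum_piFinset_le_sum_choose_mul (ι := Fin ν) (primesIn L)
          (g := fun k => 2 ^ k * (2 * N / L ^ k + 1)) fun k => by positivity

theorem moment_omegaL (ν : ℕ) (hν : 1 ≤ ν) :
    ∃ C : ℝ, 0 < C ∧ ∀ (L T : ℝ) (a : ℤ), 3 ≤ L → 1 ≤ T →
      ∑ t ∈ Finset.Ioo (-⌈T⌉) ⌈T⌉, (omegaL L (t ^ 2 - a) : ℝ) ^ ν ≤
        C * (T / Real.log L + L ^ ν / (Real.log L) ^ ν) := by
  refine ⟨(ν + 1) * ν ^ ν * 12 ^ ν * 4, by positivity, fun L T a hL hT => ?_⟩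
  have hL₀ : 0 < L := by linarith
  have hlogL : 1 ≤ log L := by
    rw [le_log_iff_exp_le hL₀]
    linarith [exp_one_lt_three]
  have hP : (#(primesIn L) : ℝ) * log L ≤ 6 * L :=
    (card_primesIn_mul_log_le hL₀).trans <| mul_le_mul_of_nonneg_right
      (by linarith [log_le_sub_one_of_pos (by norm_num : (0 : ℝ) < 4)]) hL₀.le
  have hT' : 2 * (⌈T⌉ : ℝ) / log L + (L / log L) ^ ν ≤ 4 * (T / log L + L ^ ν / log L ^ ν) := by
    have hceil : 2 * (⌈T⌉ : ℝ) ≤ 4 * T := by linarith [Int.ceil_lt_add_one T]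
    have hLν : 0 ≤ L ^ ν / log L ^ ν := by positivity
    rw [div_pow, mul_add, ← mul_div_assoc]
    linarith [div_le_div_of_nonneg_right hceil (by linarith : 0 ≤ log L)]
  calc ∑ t ∈ Ioo (-⌈T⌉) ⌈T⌉, (omegaL L (t ^ 2 - a) : ℝ) ^ ν
      ≤ ∑ k ∈ range (ν + 1),
          (#(primesIn L)).choose k * k ^ ν * (2 ^ k * (2 * ⌈T⌉ / L ^ k + 1)) :=
        sum_omegaL_pow_le hL₀ (Int.ceil_nonneg (by linarith)) a ν
    _ ≤ ∑ _k ∈ range (ν + 1), ν ^ ν * (2 * 6) ^ ν * (2 * ⌈T⌉ / log L + (L / log L) ^ ν) :=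
        sum_le_sum fun k hk => choose_mul_pow_mul_le (by norm_num) hL₀ hlogL hP (by positivity)
          (by omega) (Nat.lt_succ_iff.1 (mem_range.1 hk))
    _ ≤ (ν + 1) * ν ^ ν * 12 ^ ν * (4 * (T / log L + L ^ ν / log L ^ ν)) := by
        rw [sum_const, card_range, nsmul_eq_mul]
        push_cast
        rw [show (2 : ℝ) * 6 = 12 by norm_num, ← mul_assoc, ← mul_assoc]
        gcongr
    _ = (ν + 1) * ν ^ ν * 12 ^ ν * 4 * (T / log L + L ^ ν / log L ^ ν) := by ring
end

section
/- Fix ν ≥ 1. For each j = 0,…,ν, let Q_j be the set of 2ν-tuples (ℓ₁,…,ℓ_{2ν}) of primes in [L, 2L] such that the product ℓ₁⋯ℓ_{2ν} has the form k²m with m squarefree and k a product of exactly j primes. Then #Q_j ≪ (π(2L) - π(L))^{2ν - j}, where the implied constant depends only on ν. -/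
/-!
If `ℓ₁ ⋯ ℓ_M = k² m` with all `ℓᵢ` prime, the distinct `ℓᵢ` are prime factors of `k` or of `m`,
so there are at most `Ω k + Ω m = M - Ω k` of them. A tuple counted by `Q_j` therefore takes at
most `M - j` distinct values among the primes `P` of `[L, 2L]`, and factors through `Fin (M - j)`;
this gives at most `(M - j)^M · #P^(M - j)` tuples. Finally `#P ≤ π(2L) - π(L) + 1`, and by
Bertrand's postulate `π(2L) - π(L) ≥ 1`.
-/

open Finset Function
open scoped ArithmeticFunction.Omega Nat.Prime

lemma Nat.card_primeFactors_le_cardFactors (n : ℕ) : #n.primeFactors ≤ Ω n :=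
  ArithmeticFunction.cardFactors_apply ▸ List.toFinset_card_le _

lemma card_image_add_cardFactors_le_of_prod_eq_sq_mul {ι : Type*} [Fintype ι] (ℓ : ι → ℕ)
    (hℓ : ∀ i, (ℓ i).Prime) {k m : ℕ} (h : ∏ i, ℓ i = k ^ 2 * m) :
    #(univ.image ℓ) + Ω k ≤ Fintype.card ι := by
  classical
  have hN : ∏ i, ℓ i ≠ 0 := prod_ne_zero_iff.mpr fun i _ => (hℓ i).ne_zero
  obtain ⟨hk, hm⟩ : k ≠ 0 ∧ m ≠ 0 := by simpa [h] using hN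
  have hΩ : Ω (∏ i, ℓ i) = Fintype.card ι := by
    rw [prod_eq_multiset_prod, ArithmeticFunction.cardFactors_multiset_prod (by simpa using hN)]
    simp [hℓ]
  have himage : univ.image ℓ ⊆ k.primeFactors ∪ m.primeFactors := by
    rw [← Nat.primeFactors_pow k two_ne_zero, ← Nat.primeFactors_mul (pow_ne_zero 2 hk) hm, ← h]
    simp only [image_subset_iff, Nat.mem_primeFactors]
    exact fun i _ => ⟨hℓ i, dvd_prod_of_mem ℓ (mem_univ i), hN⟩
  calc #(univ.image ℓ) + Ω k ≤ #k.primeFactors + #m.primeFactors + Ω k := by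
        gcongr; exact (card_le_card himage).trans (card_union_le _ _)
    _ ≤ Ω k + Ω m + Ω k := by
        gcongr <;> exact Nat.card_primeFactors_le_cardFactors _
    _ = Fintype.card ι := by
        rw [← hΩ, h, ArithmeticFunction.cardFactors_mul (pow_ne_zero 2 hk) hm,
          ArithmeticFunction.cardFactors_pow]
        ring

lemma exists_fin_comp_eq_of_card_image_le {ι α : Type*} [Fintype ι] [DecidableEq α]
    {s : Finset α} (hs : s.Nonempty) {f : ι → α} (hf : ∀ i, f i ∈ s) {r : ℕ}
    (hr : #(univ.image f) ≤ r) : ∃ σ : ι → Fin r, ∃ g : Fin r → α, (∀ a, g a ∈ s) ∧ g ∘ σ = f := by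
  let e : univ.image f ↪ Fin r := (univ.image f).equivFin.toEmbedding.trans (Fin.castLEEmb hr)
  let σ i := e ⟨f i, mem_image_of_mem f (mem_univ i)⟩
  have hfσ : f.FactorsThrough σ := fun i i' h => congrArg Subtype.val (e.injective h)
  refine ⟨σ, extend σ f fun _ => hs.choose, fun a => ?_, funext (hfσ.extend_apply _)⟩
  by_cases ha : ∃ i, σ i = a
  · obtain ⟨i, rfl⟩ := ha
    exact hfσ.extend_apply _ i ▸ hf i
  · exact extend_apply' _ _ _ ha ▸ hs.choose_spec

lemma card_filter_card_image_le {ι α : Type*} [Fintype ι] [DecidableEq ι] [DecidableEq α]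
    {s : Finset α} (hs : s.Nonempty) (r : ℕ) :
    #{f ∈ Fintype.piFinset fun _ : ι => s | #(univ.image f) ≤ r} ≤
      r ^ Fintype.card ι * #s ^ r := by
  calc _ ≤ #((univ ×ˢ Fintype.piFinset fun _ : Fin r => s).image fun p => p.2 ∘ p.1) := by
        refine card_le_card fun f hf => ?_
        simp only [mem_filter, Fintype.mem_piFinset] at hf
        obtain ⟨σ, g, hg, rfl⟩ := exists_fin_comp_eq_of_card_image_le hs hf.1 hf.2
        exact mem_image.mpr ⟨(σ, g), by simpa using hg, rfl⟩
    _ ≤ _ := card_image_le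
    _ = r ^ Fintype.card ι * #s ^ r := by simp

lemma ncard_le_of_prod_eq_sq_mul {ι : Type*} [Fintype ι] [DecidableEq ι] {P : Finset ℕ}
    (hP : P.Nonempty) (hP_prime : ∀ p ∈ P, p.Prime) {j : ℕ} {S : Set (ι → ℕ)}
    (hS : ∀ ℓ ∈ S, (∀ i, ℓ i ∈ P) ∧ ∃ k m : ℕ, ∏ i, ℓ i = k ^ 2 * m ∧ Ω k = j) :
    S.ncard ≤ (Fintype.card ι - j) ^ Fintype.card ι * #P ^ (Fintype.card ι - j) := by
  refine le_trans ?_ (card_filter_card_image_le hP _)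
  rw [← Set.ncard_coe_finset]
  refine Set.ncard_le_ncard (fun ℓ hℓ => ?_) (finite_toSet _)
  obtain ⟨hℓP, k, m, hkm, rfl⟩ := hS ℓ hℓ
  have := card_image_add_cardFactors_le_of_prod_eq_sq_mul ℓ (fun i => hP_prime _ (hℓP i)) hkm
  simp only [mem_coe, mem_filter, Fintype.mem_piFinset]
  exact ⟨hℓP, by omega⟩

lemma Nat.card_primesLE_sdiff {a b : ℕ} (hab : a ≤ b) :
    #(primesLE b \ primesLE a) = π b - π a := by
  rw [card_sdiff_of_subset, primesLE_card_eq_primeCounting, primesLE_card_eq_primeCounting]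
  intro p hp
  rw [mem_primesLE] at hp ⊢
  exact ⟨hp.1.trans hab, hp.2⟩

lemma Nat.card_filter_prime_Icc_le {a b : ℕ} (hab : a ≤ b) :
    #{p ∈ Icc a b | p.Prime} ≤ π b - π a + 1 := by
  rw [← card_primesLE_sdiff hab]
  refine (card_le_card fun p hp => ?_).trans (card_insert_le a _)
  simp only [mem_filter, mem_Icc] at hp
  simp only [mem_insert, mem_sdiff, mem_primesLE, not_and]
  rcases hp.1.1.eq_or_lt with rfl | hap
  · exact .inl rfl
  · exact .inr ⟨⟨hp.1.2, hp.2⟩, fun hpa => absurd hpa (by omega)⟩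

lemma Nat.card_filter_prime_Icc_le_two_mul {a b : ℕ} (ha : a ≠ 0) (hab : 2 * a ≤ b) :
    #{p ∈ Icc a b | p.Prime} ≤ 2 * (π b - π a) := by
  obtain ⟨p, hp, hap, hpa⟩ := exists_prime_lt_and_le_two_mul a ha
  have hp_mem : p ∈ primesLE b \ primesLE a := by
    simp only [mem_sdiff, mem_primesLE, not_and]
    exact ⟨⟨by omega, hp⟩, by omega⟩
  have hpos : 0 < π b - π a := by
    rw [← card_primesLE_sdiff (by omega)]
    exact Finset.card_pos.mpr ⟨p, hp_mem⟩
  have := card_filter_prime_Icc_le (a := a) (b := b) (by omega)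
  omega

lemma Nat.filter_prime_Icc_nonempty {a b : ℕ} (ha : a ≠ 0) (hab : 2 * a ≤ b) :
    {p ∈ Icc a b | p.Prime}.Nonempty := by
  obtain ⟨p, hp, hap, hpa⟩ := exists_prime_lt_and_le_two_mul a ha
  exact ⟨p, mem_filter.mpr ⟨mem_Icc.mpr ⟨by omega, by omega⟩, hp⟩⟩

theorem card_tuples_with_square_part_general (ν : ℕ) :
    ∃ C : ℝ, 0 < C ∧ ∀ (L : ℝ), 3 ≤ L → ∀ j : ℕ, j ≤ ν →
      (({ℓ : Fin (2 * ν) → ℕ |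
          (∀ i, (ℓ i).Prime ∧ L ≤ ℓ i ∧ (ℓ i : ℝ) ≤ 2 * L) ∧
          ∃ k m : ℕ, (∏ i, ℓ i) = k ^ 2 * m ∧ Squarefree m ∧
            k.primeFactorsList.length = j}).ncard : ℝ) ≤
        C * ((⌊2 * L⌋₊.primeCounting - ⌊L⌋₊.primeCounting : ℕ) : ℝ) ^ (2 * ν - j) := by
  refine ⟨((2 * ν) ^ (2 * ν) * 2 ^ (2 * ν) : ℕ), Nat.cast_pos.mpr
    (Nat.mul_pos Nat.pow_self_pos (by positivity)), fun L hL j hj => ?_⟩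
  set a := ⌊L⌋₊
  set b := ⌊2 * L⌋₊
  set P := {p ∈ Icc a b | p.Prime}
  have ha : a ≠ 0 := Nat.one_le_iff_ne_zero.mp (Nat.le_floor (by norm_num; linarith))
  have hab : 2 * a ≤ b := Nat.le_floor (by push_cast; linarith [Nat.floor_le (by linarith : 0 ≤ L)])
  have hP : #P ≤ 2 * (π b - π a) := Nat.card_filter_prime_Icc_le_two_mul ha hab
  have hP_ne : P.Nonempty := Nat.filter_prime_Icc_nonempty ha hab
  refine (Nat.cast_le.mpr (ncard_le_of_prod_eq_sq_mul (j := j) hP_ne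
    (fun p hp => (mem_filter.mp hp).2) ?_)).trans ?_
  · rintro ℓ ⟨hℓ, k, m, hkm, -, hk⟩
    refine ⟨fun i => ?_, k, m, hkm, ArithmeticFunction.cardFactors_apply ▸ hk⟩
    exact mem_filter.mpr ⟨mem_Icc.mpr ⟨Nat.floor_le_of_le (hℓ i).2.1, Nat.le_floor (hℓ i).2.2⟩,
      (hℓ i).1⟩
  rw [Fintype.card_fin]
  norm_cast
  calc (2 * ν - j) ^ (2 * ν) * #P ^ (2 * ν - j)
      ≤ (2 * ν) ^ (2 * ν) * (2 ^ (2 * ν - j) * (π b - π a) ^ (2 * ν - j)) := by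
        rw [← mul_pow]; gcongr; omega
    _ ≤ (2 * ν) ^ (2 * ν) * 2 ^ (2 * ν) * (π b - π a) ^ (2 * ν - j) := by
        rw [mul_assoc]; gcongr <;> omega

theorem card_tuples_with_square_part (ν : ℕ) (hν : 1 ≤ ν) :
    ∃ C : ℝ, 0 < C ∧ ∀ (L : ℝ), 3 ≤ L → ∀ j : ℕ, j ≤ ν →
      (({ℓ : Fin (2 * ν) → ℕ |
          (∀ i, (ℓ i).Prime ∧ L ≤ ℓ i ∧ (ℓ i : ℝ) ≤ 2 * L) ∧
          ∃ k m : ℕ, (∏ i, ℓ i) = k ^ 2 * m ∧ Squarefree m ∧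
            k.primeFactorsList.length = j}).ncard : ℝ) ≤
        C * ((⌊2 * L⌋₊.primeCounting - ⌊L⌋₊.primeCounting : ℕ) : ℝ) ^ (2 * ν - j) :=
  card_tuples_with_square_part_general ν
end
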